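/- arXiv:2409.00037 — 3 statements merged into one kernel-verified Lean document; each statement's English description precedes it below -/
import Mathlib

section
/- Let r > 0 and let f : ℝ² → ℝ be measurable and square-integrable with support contained in the closed ball of radius r centered at the origin. Then ∫_{ω ∈ (0, π)} ∫_{s ∈ ℝ} (ℛf(ω, s))² ds dω ≤ 2 π r ∫_{ℝ²} f(x)² dx. -/
open MeasureTheory Real

lemma aux_CS (r : ℝ) (hr : 0 ≤ r) (h : ℝ → ℝ) (hm : AEStronglyMeasurable h volume)
    (hs : ∀ t, t ∉ Set.Icc (-r) r → h t = 0)
    (hh2 : Integrable (fun t => h t ^ 2)) :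
    (∫ t, h t) ^ 2 ≤ 2 * r * ∫ t, h t ^ 2 := by
  set S : Set ℝ := Set.Icc (-r) r with hS
  set μ : Measure ℝ := volume.restrict S with hμ
  have hfin : IsFiniteMeasure μ := by
    constructor
    rw [hμ, Measure.restrict_apply_univ, hS, Real.volume_Icc]
    exact ENNReal.ofReal_lt_top
  have hμuniv : (μ Set.univ).toReal = 2 * r := by
    rw [hμ, Measure.restrict_apply_univ, hS, Real.volume_Icc, ENNReal.toReal_ofReal (by linarith)]
    ring
  have h1 : ∫ t, h t = ∫ t, h t ∂μ :=
    (setIntegral_eq_integral_of_forall_compl_eq_zero fun x hx => hs x hx).symm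
  have h2 : ∫ t, h t ^ 2 ∂μ ≤ ∫ t, h t ^ 2 := by
    apply setIntegral_le_integral hh2
    filter_upwards with x using sq_nonneg _
  have hmem2 : MemLp h (ENNReal.ofReal 2) μ := by
    rw [show ENNReal.ofReal 2 = 2 by norm_num]
    exact (memLp_two_iff_integrable_sq hm.restrict).2 hh2.restrict
  have hmem1 : MemLp (fun _ : ℝ => (1 : ℝ)) (ENNReal.ofReal 2) μ := memLp_const 1
  have hpq : Real.HolderConjugate 2 2 := by constructor <;> norm_num
  have key := integral_mul_norm_le_Lp_mul_Lq (μ := μ) hpq hmem2 hmem1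
  simp only [norm_one, mul_one] at key
  have hA : ∫ a, ‖h a‖ ^ (2:ℝ) ∂μ = ∫ a, h a ^ 2 ∂μ := by
    congr 1; funext a
    rw [show (2:ℝ) = ((2:ℕ):ℝ) by norm_num, Real.rpow_natCast]
    simp [sq_abs]
  have hB : ∫ _a : ℝ, (1:ℝ) ^ (2:ℝ) ∂μ = 2 * r := by
    simp [Measure.real, hμuniv]
  rw [hA, hB] at key
  have hAnn : 0 ≤ ∫ a, h a ^ 2 ∂μ := integral_nonneg fun a => sq_nonneg _
  have h2r : (0:ℝ) ≤ 2 * r := by linarith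
  calc (∫ t, h t) ^ 2 = |∫ t, h t ∂μ| ^ 2 := by rw [h1, sq_abs]
    _ ≤ (∫ a, ‖h a‖ ∂μ) ^ 2 := by
        apply pow_le_pow_left₀ (abs_nonneg _)
        exact (Real.norm_eq_abs _ ▸ norm_integral_le_integral_norm h)
    _ ≤ ((∫ a, h a ^ 2 ∂μ) ^ ((1:ℝ)/2) * (2 * r) ^ ((1:ℝ)/2)) ^ 2 := by
        apply pow_le_pow_left₀ (integral_nonneg fun a => norm_nonneg _) key
    _ = (∫ a, h a ^ 2 ∂μ) * (2 * r) := by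
        rw [mul_pow, ← Real.rpow_natCast ((∫ a, h a ^ 2 ∂μ) ^ ((1:ℝ)/2)) 2,
          ← Real.rpow_natCast ((2*r) ^ ((1:ℝ)/2)) 2, ← Real.rpow_mul hAnn, ← Real.rpow_mul h2r]
        norm_num
    _ ≤ (∫ t, h t ^ 2) * (2 * r) := mul_le_mul_of_nonneg_right h2 h2r
    _ = 2 * r * ∫ t, h t ^ 2 := by ring

/-- The 2D Radon transform: integral of `f` along the line at signed distance `s`
from the origin with normal direction `(cos ω, sin ω)`. -/
noncomputable def Radon (f : EuclideanSpace ℝ (Fin 2) → ℝ) (ω s : ℝ) : ℝ :=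
  ∫ t : ℝ, f (WithLp.toLp 2 ![s * Real.cos ω - t * Real.sin ω, s * Real.sin ω + t * Real.cos ω])

theorem radon_L2_bound
    (r : ℝ) (hr : 0 < r) (f : EuclideanSpace ℝ (Fin 2) → ℝ)
    (hf : Measurable f) (hf2 : Integrable (fun x => f x ^ 2))
    (hsupp : Function.support f ⊆ Metric.closedBall 0 r) :
    ∫ ω in Set.Ioo 0 Real.pi, ∫ s : ℝ, (Radon f ω s) ^ 2 ≤
      2 * Real.pi * r * ∫ x : EuclideanSpace ℝ (Fin 2), f x ^ 2 := by
  have hI : 0 ≤ ∫ x : EuclideanSpace ℝ (Fin 2), f x ^ 2 := integral_nonneg fun x => sq_nonneg _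
  set I := ∫ x : EuclideanSpace ℝ (Fin 2), f x ^ 2 with hIdef
  -- the per-angle bound
  have key : ∀ ω : ℝ, ∫ s : ℝ, (Radon f ω s) ^ 2 ≤ 2 * r * I := by
    intro ω
    -- the rotation as a measurable equiv ℝ × ℝ ≃ᵐ EuclideanSpace ℝ (Fin 2)
    set ρ : ℂ ≃ᵐ ℂ := (rotation (Circle.exp ω)).toHomeomorph.toMeasurableEquiv with hρ
    set Φ : (ℝ × ℝ) ≃ᵐ EuclideanSpace ℝ (Fin 2) :=
      Complex.measurableEquivRealProd.symm.trans (ρ.trans (Complex.measurableEquivRealProd.trans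
        (MeasurableEquiv.finTwoArrow.symm.trans (MeasurableEquiv.toLp 2 (Fin 2 → ℝ)))))
      with hΦdef
    have hρp : MeasurePreserving ρ volume volume :=
      (rotation (Circle.exp ω)).measurePreserving
    have hΦp : MeasurePreserving Φ volume volume := by
      have h5 := (EuclideanSpace.volume_preserving_symm_measurableEquiv_toLp (Fin 2)).symm _
      have h4 := (volume_preserving_finTwoArrow ℝ).symm _
      have h3 := Complex.volume_preserving_equiv_real_prod
      have h1 := Complex.volume_preserving_equiv_real_prod.symm _
      exact (((h5.comp h4).comp h3).comp hρp).comp h1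
    have hΦeq : ∀ s t : ℝ, Φ (s, t) =
        (WithLp.toLp 2 ![s * Real.cos ω - t * Real.sin ω, s * Real.sin ω + t * Real.cos ω] :
          EuclideanSpace ℝ (Fin 2)) := by
      intro s t
      ext i
      fin_cases i <;>
      simp [hΦdef, hρ, Complex.measurableEquivRealProd, rotation_apply, Complex.exp_mul_I,
        Complex.mul_re, Complex.mul_im, Complex.cos_ofReal_re, Complex.sin_ofReal_re,
        MeasurableEquiv.finTwoArrow, MeasurableEquiv.coe_toLp] <;> ring
    set g : ℝ × ℝ → ℝ := fun p => f (Φ p) with hgdef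
    have hgm : Measurable g := hf.comp Φ.measurable
    -- total square integral
    have hg2int : Integrable (fun p => g p ^ 2) := by
      have := (hΦp.integrable_comp_emb Φ.measurableEmbedding
        (g := fun x => f x ^ 2)).2 hf2
      exact this
    have hg2tot : ∫ p : ℝ × ℝ, g p ^ 2 = I :=
      hΦp.integral_comp Φ.measurableEmbedding (fun x => f x ^ 2)
    -- support in t
    have hgsupp : ∀ s t : ℝ, t ∉ Set.Icc (-r) r → g (s, t) = 0 := by
      intro s t ht
      by_contra hne
      have hx : Φ (s, t) ∈ Metric.closedBall (0 : EuclideanSpace ℝ (Fin 2)) r :=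
        hsupp (Function.mem_support.2 hne)
      rw [mem_closedBall_zero_iff] at hx
      have hnorm : ‖Φ (s, t)‖ ^ 2 = s ^ 2 + t ^ 2 := by
        rw [hΦeq s t, EuclideanSpace.norm_eq, Real.sq_sqrt (by positivity)]
        have hst := Real.sin_sq_add_cos_sq ω
        simp [Fin.sum_univ_two]
        nlinarith [hst]
      have ht' : r < |t| := by
        simp only [Set.mem_Icc, not_and_or, not_le] at ht
        rcases ht with h | h
        · rw [abs_of_nonpos (by linarith)]; linarith
        · rw [abs_of_pos (by linarith)]; exact h
      nlinarith [abs_nonneg t, sq_abs t, norm_nonneg (Φ (s, t)), sq_abs ‖Φ (s,t)‖]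
    -- Fubini on g^2
    have hprod : (volume : Measure (ℝ × ℝ)) = (volume : Measure ℝ).prod volume :=
      (Measure.volume_eq_prod ℝ ℝ)
    have hg2int' : Integrable (fun p : ℝ × ℝ => g p ^ 2) ((volume : Measure ℝ).prod volume) :=
      hprod ▸ hg2int
    have hfub : ∫ s : ℝ, ∫ t : ℝ, g (s, t) ^ 2 = I := by
      rw [← hg2tot, hprod]
      exact (integral_prod _ hg2int').symm
    have hGint : Integrable (fun s => ∫ t : ℝ, g (s, t) ^ 2) := hg2int'.integral_prod_left
    have hsec : ∀ᵐ s : ℝ, Integrable (fun t => g (s, t) ^ 2) := hg2int'.prod_right_ae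
    -- pointwise (a.e.) bound on Radon transform
    have hae : ∀ᵐ s : ℝ, (Radon f ω s) ^ 2 ≤ 2 * r * ∫ t : ℝ, g (s, t) ^ 2 := by
      filter_upwards [hsec] with s hs2
      have hRe : Radon f ω s = ∫ t : ℝ, g (s, t) := by
        unfold Radon
        congr 1; funext t; exact (congrArg f (hΦeq s t)).symm
      rw [hRe]
      exact aux_CS r hr.le (fun t => g (s, t))
        (hgm.comp measurable_prodMk_left).aestronglyMeasurable
        (fun t ht => hgsupp s t ht) hs2
    have : ∫ s : ℝ, (Radon f ω s) ^ 2 ≤ ∫ s : ℝ, 2 * r * ∫ t : ℝ, g (s, t) ^ 2 := by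
      apply integral_mono_of_nonneg
      · filter_upwards with s using sq_nonneg _
      · exact hGint.const_mul _
      · exact hae
    calc ∫ s : ℝ, (Radon f ω s) ^ 2 ≤ ∫ s : ℝ, 2 * r * ∫ t : ℝ, g (s, t) ^ 2 := this
      _ = 2 * r * ∫ s : ℝ, ∫ t : ℝ, g (s, t) ^ 2 := integral_const_mul _ _
      _ = 2 * r * I := by rw [hfub]
  -- integrate over ω ∈ (0, π)
  have hvol : (volume (Set.Ioo (0:ℝ) Real.pi)).toReal = Real.pi := by
    rw [Real.volume_Ioo, ENNReal.toReal_ofReal (by linarith [Real.pi_pos])]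
    ring
  by_cases hFi : IntegrableOn (fun ω => ∫ s : ℝ, (Radon f ω s) ^ 2) (Set.Ioo 0 Real.pi)
  · calc ∫ ω in Set.Ioo 0 Real.pi, ∫ s : ℝ, (Radon f ω s) ^ 2
        ≤ ∫ _ω in Set.Ioo 0 Real.pi, 2 * r * I := by
          apply setIntegral_mono_on hFi (integrableOn_const (by
            rw [Real.volume_Ioo]; exact ENNReal.ofReal_ne_top)) measurableSet_Ioo
          intro ω _
          exact key ω
      _ = Real.pi * (2 * r * I) := by rw [setIntegral_const, smul_eq_mul, Measure.real, hvol]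
      _ = 2 * Real.pi * r * I := by ring
  · rw [integral_undef hFi]
    have hπ := Real.pi_pos
    have : (0:ℝ) ≤ 2 * Real.pi * r := by positivity
    exact mul_nonneg this hI
end

section
/- Let r > 0, let Ω ⊆ ℝ² be a measurable set contained in the closed ball of radius r centered at the origin, let h : ℝ² → ℝ be measurable with |h| ≤ M_h everywhere and with support contained in Ω, let B : ℝ² → (ℝ² →L ℝ² →L ℝ) be a map into continuous bilinear forms with operator norm ‖B(x)‖ ≤ M₂ for all x, and let v : ℝ² → ℝ² be measurable with ∫_Ω ‖v(x)‖² dx < ∞. Then |∫_Ω ℛ^#(ℛh)(x) · B(x)(v(x), v(x)) dx| ≤ 2 π r M_h M₂ ∫_Ω ‖v(x)‖² dx. -/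
open MeasureTheory Real

/-- The back-projection (adjoint Radon) operator:
`ℛ^# g (x) = ∫_{ω ∈ (0,π)} g ω (x₁ cos ω + x₂ sin ω) dω`. -/
noncomputable def BackProj (g : ℝ → ℝ → ℝ) (x : EuclideanSpace ℝ (Fin 2)) : ℝ :=
  ∫ ω in Set.Ioo 0 Real.pi, g ω (x 0 * Real.cos ω + x 1 * Real.sin ω)

theorem hessian_second_term_bound
    (r : ℝ) (hr : 0 < r)
    (Ω : Set (EuclideanSpace ℝ (Fin 2))) (hΩmeas : MeasurableSet Ω)
    (hΩ : Ω ⊆ Metric.closedBall 0 r)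
    (h : EuclideanSpace ℝ (Fin 2) → ℝ) (hmeas : Measurable h)
    (M_h : ℝ) (hbd : ∀ x, |h x| ≤ M_h)
    (hsupp : Function.support h ⊆ Ω)
    (B : EuclideanSpace ℝ (Fin 2) →
      (EuclideanSpace ℝ (Fin 2) →L[ℝ] EuclideanSpace ℝ (Fin 2) →L[ℝ] ℝ))
    (M₂ : ℝ) (hB : ∀ x, ‖B x‖ ≤ M₂)
    (v : EuclideanSpace ℝ (Fin 2) → EuclideanSpace ℝ (Fin 2))
    (hv : Measurable v)
    (hvint : IntegrableOn (fun x => ‖v x‖ ^ 2) Ω) :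
    |∫ x in Ω, BackProj (Radon h) x * (B x (v x) (v x))| ≤
      2 * Real.pi * r * M_h * M₂ * ∫ x in Ω, ‖v x‖ ^ 2 := by
  have hM_h : 0 ≤ M_h := le_trans (abs_nonneg _) (hbd 0)
  have hM₂ : 0 ≤ M₂ := le_trans (norm_nonneg (B 0)) (hB 0)
  -- Step 1: bound on the Radon transform
  have hRadon : ∀ ω s : ℝ, |Radon h ω s| ≤ 2 * r * M_h := by
    intro ω s
    have hdom : ∀ t : ℝ,
        ‖h (WithLp.toLp 2 ![s * Real.cos ω - t * Real.sin ω, s * Real.sin ω + t * Real.cos ω])‖ ≤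
          (Set.Icc (-r) r).indicator (fun _ => M_h) t := by
      intro t
      by_cases ht : t ∈ Set.Icc (-r) r
      · rw [Set.indicator_of_mem ht]
        exact hbd _
      · rw [Set.indicator_of_notMem ht]
        set p : EuclideanSpace ℝ (Fin 2) :=
          WithLp.toLp 2 ![s * Real.cos ω - t * Real.sin ω, s * Real.sin ω + t * Real.cos ω] with hp
        have htr : r < |t| := by
          rcases lt_or_ge r t with h1 | h1
          · rwa [abs_of_pos (lt_trans hr h1)]
          · have h2 : t < -r := by
              by_contra hc
              exact ht ⟨not_lt.mp hc, h1⟩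
            rw [abs_of_neg (by linarith)]
            linarith
        have hsq : ‖p‖ = Real.sqrt (s ^ 2 + t ^ 2) := by
          rw [EuclideanSpace.norm_eq]
          congr 1
          simp only [hp, PiLp.toLp_apply, Fin.sum_univ_two, Matrix.cons_val_zero, Matrix.cons_val_one,
            Matrix.head_cons, Real.norm_eq_abs, sq_abs]
          nlinarith [Real.sin_sq_add_cos_sq ω]
        have hnorm : r < ‖p‖ := by
          rw [hsq]
          have h3 : |t| ≤ Real.sqrt (s ^ 2 + t ^ 2) := by
            rw [← Real.sqrt_sq_eq_abs]
            exact Real.sqrt_le_sqrt (by nlinarith)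
          linarith
        have hout : p ∉ Ω := by
          intro hmem
          have h4 := hΩ hmem
          rw [Metric.mem_closedBall, dist_zero_right] at h4
          linarith
        have hz : h p = 0 := by
          by_contra hc
          exact hout (hsupp hc)
        simp [hz]
    have hg : Integrable ((Set.Icc (-r) r).indicator (fun _ => M_h)) := by
      rw [integrable_indicator_iff measurableSet_Icc]
      exact integrableOn_const measure_Icc_lt_top.ne
    calc |Radon h ω s| ≤ ∫ t : ℝ, (Set.Icc (-r) r).indicator (fun _ => M_h) t :=
          norm_integral_le_of_norm_le hg (Filter.Eventually.of_forall hdom)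
      _ = 2 * r * M_h := by
          rw [integral_indicator_const _ measurableSet_Icc, Real.volume_real_Icc_of_le (by linarith), smul_eq_mul]
          ring
  -- Step 2: bound on the back-projection
  have hBP : ∀ x, |BackProj (Radon h) x| ≤ Real.pi * (2 * r * M_h) := by
    intro x
    have hg : IntegrableOn (fun _ : ℝ => 2 * r * M_h) (Set.Ioo 0 Real.pi) :=
      integrableOn_const measure_Ioo_lt_top.ne
    have key : ‖∫ ω in Set.Ioo 0 Real.pi,
        Radon h ω (x 0 * Real.cos ω + x 1 * Real.sin ω)‖ ≤
        ∫ _ in Set.Ioo 0 Real.pi, 2 * r * M_h :=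
      norm_integral_le_of_norm_le hg (Filter.Eventually.of_forall fun ω => hRadon ω _)
    have hval : (∫ _ in Set.Ioo 0 Real.pi, (2 * r * M_h : ℝ)) = Real.pi * (2 * r * M_h) := by
      rw [setIntegral_const, Real.volume_real_Ioo_of_le Real.pi_nonneg, smul_eq_mul, sub_zero]
    rw [hval] at key
    rw [BackProj, ← Real.norm_eq_abs]
    exact key
  -- Step 3: conclude
  set c : ℝ := 2 * Real.pi * r * M_h * M₂ with hc
  have hptw : ∀ x, ‖BackProj (Radon h) x * (B x (v x) (v x))‖ ≤ c * ‖v x‖ ^ 2 := by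
    intro x
    rw [norm_mul]
    have h1 : ‖BackProj (Radon h) x‖ ≤ Real.pi * (2 * r * M_h) := by
      rw [Real.norm_eq_abs]; exact hBP x
    have h2 : ‖B x (v x) (v x)‖ ≤ M₂ * ‖v x‖ ^ 2 := by
      calc ‖B x (v x) (v x)‖ ≤ ‖B x‖ * ‖v x‖ * ‖v x‖ :=
            ContinuousLinearMap.le_opNorm₂ (B x) (v x) (v x)
        _ ≤ M₂ * ‖v x‖ ^ 2 := by nlinarith [norm_nonneg (v x), hB x]
    calc ‖BackProj (Radon h) x‖ * ‖B x (v x) (v x)‖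
        ≤ (Real.pi * (2 * r * M_h)) * (M₂ * ‖v x‖ ^ 2) :=
          mul_le_mul h1 h2 (norm_nonneg _)
            (by positivity)
      _ = c * ‖v x‖ ^ 2 := by rw [hc]; ring
  have hgint : IntegrableOn (fun x => c * ‖v x‖ ^ 2) Ω := hvint.const_mul c
  calc |∫ x in Ω, BackProj (Radon h) x * (B x (v x) (v x))|
      ≤ ∫ x in Ω, c * ‖v x‖ ^ 2 :=
        norm_integral_le_of_norm_le hgint (Filter.Eventually.of_forall hptw)
    _ = c * ∫ x in Ω, ‖v x‖ ^ 2 := MeasureTheory.integral_const_mul c _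
end

section
/- Let H be a real Hilbert space, let a : H × H → ℝ be a continuous symmetric bilinear form satisfying a(v, v) ≥ C_coe ‖v‖² for all v ∈ H with C_coe > 0, let α > 0, and let D : H → ℝ be twice continuously differentiable with ‖D²D(w)‖ ≤ 2 C_BC for all w ∈ H (operator norm of the second derivative as a bilinear form). Define J : H → ℝ by J(u) = ½ a(u, u) + α D(u). Suppose u* ∈ H is a critical point of J, i.e. a(u*, v) + α (D D(u*))(v) = 0 for all v ∈ H. If α < C_coe / (2 C_BC), then J(u* + v) > J(u*) for every v ∈ H with v ≠ 0; in particular u* is the unique global minimizer of J. -/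
open MeasureTheory Real

set_option maxHeartbeats 1000000 in
theorem critical_point_is_strict_global_min
    {H : Type*} [NormedAddCommGroup H] [InnerProductSpace ℝ H] [CompleteSpace H]
    (a : H →L[ℝ] H →L[ℝ] ℝ) (hsymm : ∀ u v : H, a u v = a v u)
    (C_coe : ℝ) (hC : 0 < C_coe) (hcoer : ∀ v : H, C_coe * ‖v‖ ^ 2 ≤ a v v)
    (α : ℝ) (hα : 0 < α)
    (D : H → ℝ) (hD : ContDiff ℝ 2 D)
    (C_BC : ℝ) (hDD : ∀ w : H, ‖iteratedFDeriv ℝ 2 D w‖ ≤ 2 * C_BC)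
    (J : H → ℝ) (hJ : ∀ u : H, J u = (1 / 2) * a u u + α * D u)
    (u' : H) (hcrit : ∀ v : H, a u' v + α * fderiv ℝ D u' v = 0)
    (hαsmall : α < C_coe / (2 * C_BC)) :
    (∀ v : H, v ≠ 0 → J u' < J (u' + v)) ∧ ∀ w : H, w ≠ u' → J u' < J w := by
  -- C_BC > 0
  have hCBC : 0 < C_BC := by
    by_contra h
    push_neg at h
    have : C_coe / (2 * C_BC) ≤ 0 :=
      div_nonpos_of_nonneg_of_nonpos hC.le (by linarith)
    linarith
  set f := fderiv ℝ D with hf_def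
  have hDdiff : Differentiable ℝ D := hD.differentiable (by norm_num)
  have hf1 : ContDiff ℝ 1 f := hD.fderiv_right (by norm_num)
  have hfd : Differentiable ℝ f := hf1.differentiable (by norm_num)
  -- bound on the derivative of f
  have hbound : ∀ x : H, ‖fderiv ℝ f x‖ ≤ 2 * C_BC := by
    intro x
    refine ContinuousLinearMap.opNorm_le_bound _ (by linarith) (fun m0 => ?_)
    refine ContinuousLinearMap.opNorm_le_bound _
      (by positivity) (fun m1 => ?_)
    have := iteratedFDeriv_two_apply (𝕜 := ℝ) D x ![m0, m1]
    simp only [Matrix.cons_val_zero, Matrix.cons_val_one, Matrix.head_cons] at this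
    rw [hf_def, ← this]
    calc ‖iteratedFDeriv ℝ 2 D x ![m0, m1]‖
        ≤ ‖iteratedFDeriv ℝ 2 D x‖ * ∏ i, ‖(![m0, m1]) i‖ :=
          ContinuousMultilinearMap.le_opNorm _ _
      _ ≤ 2 * C_BC * (‖m0‖ * ‖m1‖) := by
          rw [Fin.prod_univ_two]
          simp only [Matrix.cons_val_zero, Matrix.cons_val_one, Matrix.head_cons]
          exact mul_le_mul_of_nonneg_right (hDD x) (by positivity)
      _ = 2 * C_BC * ‖m0‖ * ‖m1‖ := by ring
  have hLip : ∀ x y : H, ‖f x - f y‖ ≤ 2 * C_BC * ‖x - y‖ := fun x y =>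
    convex_univ.norm_image_sub_le_of_norm_fderiv_le
      (fun z _ => hfd z) (fun z _ => hbound z) trivial trivial
  -- main quadratic estimate
  have key : ∀ v : H, D (u' + v) - D u' - f u' v ≥ -(C_BC * ‖v‖ ^ 2) := by
    intro v
    have hderiv : ∀ t : ℝ, HasDerivAt (fun t : ℝ => D (u' + t • v))
        (f (u' + t • v) v) t := by
      intro t
      have hline : HasDerivAt (fun t : ℝ => u' + t • v) v t := by
        simpa using ((hasDerivAt_id t).smul_const v).const_add u'
      exact ((hDdiff (u' + t • v)).hasFDerivAt).comp_hasDerivAt t hline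
    have hcont : Continuous fun t : ℝ => f (u' + t • v) v := by
      have : Continuous fun t : ℝ => u' + t • v := by continuity
      exact (ContinuousLinearMap.apply ℝ ℝ v).continuous.comp (hf1.continuous.comp this)
    have hint : D (u' + v) - D u' = ∫ t in (0:ℝ)..1, f (u' + t • v) v := by
      rw [intervalIntegral.integral_eq_sub_of_hasDerivAt
        (fun t _ => hderiv t) (hcont.intervalIntegrable 0 1)]
      simp
    have hsplit : D (u' + v) - D u' - f u' v
        = ∫ t in (0:ℝ)..1, (f (u' + t • v) v - f u' v) := by
      rw [hint, intervalIntegral.integral_sub (hcont.intervalIntegrable 0 1)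
        (intervalIntegrable_const)]
      simp
    have habs : |∫ t in (0:ℝ)..1, (f (u' + t • v) v - f u' v)|
        ≤ |∫ t in (0:ℝ)..1, 2 * C_BC * ‖v‖ ^ 2 * t| := by
      rw [← Real.norm_eq_abs]
      refine le_trans (intervalIntegral.norm_integral_le_of_norm_le zero_le_one ?_ ?_) (le_abs_self _)
      · refine ae_of_all _ (fun t ht => ?_)
        norm_num at ht
        have ht0 : 0 ≤ t := ht.1.le
        have ht1 : t ≤ 1 := ht.2
        calc ‖f (u' + t • v) v - f u' v‖
            = ‖(f (u' + t • v) - f u') v‖ := by simp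
          _ ≤ ‖f (u' + t • v) - f u'‖ * ‖v‖ := ContinuousLinearMap.le_opNorm _ _
          _ ≤ 2 * C_BC * ‖(u' + t • v) - u'‖ * ‖v‖ :=
              mul_le_mul_of_nonneg_right (hLip _ _) (norm_nonneg _)
          _ = 2 * C_BC * ‖v‖ ^ 2 * t := by
              rw [add_sub_cancel_left, norm_smul, Real.norm_eq_abs, abs_of_nonneg ht0]
              ring
      · exact (Continuous.intervalIntegrable (by continuity) 0 1)
    have hval : (∫ t in (0:ℝ)..1, 2 * C_BC * ‖v‖ ^ 2 * t) = C_BC * ‖v‖ ^ 2 := by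
      rw [intervalIntegral.integral_const_mul, integral_id]
      ring
    rw [hsplit]
    rw [hval, abs_of_nonneg (by positivity : (0:ℝ) ≤ C_BC * ‖v‖ ^ 2)] at habs
    have := abs_le.1 habs
    linarith [this.1]
  -- the main strict inequality
  have main : ∀ v : H, v ≠ 0 → J u' < J (u' + v) := by
    intro v hv
    have hv2 : 0 < ‖v‖ ^ 2 := pow_pos (norm_pos_iff.2 hv) 2
    have hexp : a (u' + v) (u' + v) = a u' u' + 2 * a u' v + a v v := by
      simp only [map_add, ContinuousLinearMap.add_apply]
      rw [hsymm v u']; ring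
    have hcv := hcrit v
    have hkey := key v
    have hco := hcoer v
    have hsm : α * C_BC < C_coe / 2 := by
      rw [lt_div_iff₀ (by linarith : 0 < 2 * C_BC)] at hαsmall
      nlinarith
    rw [hJ u', hJ (u' + v), hexp]
    have hmul := mul_le_mul_of_nonneg_left hkey hα.le
    have hA : α * C_BC * ‖v‖ ^ 2 < C_coe / 2 * ‖v‖ ^ 2 :=
      mul_lt_mul_of_pos_right (by linarith) hv2
    set nv2 := ‖v‖ ^ 2
    set Du2 := D (u' + v)
    set Du1 := D u'
    set fv := (f u') v
    set auv := (a u') v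
    set avv := (a v) v
    set auu := (a u') u'
    linarith [hmul, hA, hcv, hco]
  exact ⟨main, fun w hw => by
    have := main (w - u') (sub_ne_zero.2 hw)
    simpa using this⟩
end
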